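/- arXiv:2111.03383 — 2 statements merged into one kernel-verified Lean document; each statement's English description precedes it below -/
import Mathlib

section
/- Let p(x) = (1/Z) ∏_a ψ_a(x_a) be a factorized distribution on a finite product space, with bipartite factor graph G = (V ∪ A, E) where (i,a) ∈ E iff factor ψ_a depends on variable x_i. Let I, J, K ⊆ V be disjoint (not necessarily covering V) and suppose every path in G from a vertex of I to a vertex of K passes through a vertex of J (i.e., removing J disconnects I from K in G). Then p(x_I, x_K | x_J) = p(x_I | x_J) · p(x_K | x_J) whenever p(x_J) > 0. -/
open Finset Classical
noncomputable section

/-- The bipartite factor graph: variable vertices `Fin N`, factor vertices `A`,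
with an edge between variable `i` and factor `a` iff `i` is in the scope `S a`
of the factor. -/
def factorGraph (N : ℕ) (A : Type*) (S : A → Finset (Fin N)) :
    SimpleGraph (Fin N ⊕ A) where
  Adj v w := (∃ i a, v = Sum.inl i ∧ w = Sum.inr a ∧ i ∈ S a) ∨
             (∃ i a, v = Sum.inr a ∧ w = Sum.inl i ∧ i ∈ S a)
  symm := ⟨by rintro v w (⟨i, a, rfl, rfl, h⟩ | ⟨i, a, rfl, rfl, h⟩)
              · exact Or.inr ⟨i, a, rfl, rfl, h⟩
              · exact Or.inl ⟨i, a, rfl, rfl, h⟩⟩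
  loopless := ⟨by rintro v (⟨i, a, rfl, h, _⟩ | ⟨i, a, rfl, h, _⟩) <;> simp at h⟩

/-! The variables `R` reachable from `I` by walks avoiding `J` form a region whose boundary lies
in `J`: every factor touching `R` has its scope in `R ∪ J`. Hence `p = f · g` with `f` depending
only on `x_{R ∪ J}` and `g` only on `x_{V \ R}`, where `I ⊆ R` and `K` lies outside `R`.
For such a product, exchanging the coordinates outside `R` between two configurations turns
`p(x_I, x_J, x_K) · p(x_J)` into `p(x_I, x_J) · p(x_K, x_J)` term by term. -/

section SwapOutside

variable {ι : Type*} [DecidableEq ι] {X : ι → Type*}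

def swapOutside (L : Finset ι) : Equiv.Perm ((∀ i, X i) × (∀ i, X i)) :=
  Function.Involutive.toPerm (fun yz => (L.piecewise yz.1 yz.2, L.piecewise yz.2 yz.1))
    fun yz => by ext i <;> by_cases hi : i ∈ L <;> simp [hi]

@[simp]
theorem swapOutside_apply (L : Finset ι) (y z : ∀ i, X i) :
    swapOutside L (y, z) = (L.piecewise y z, L.piecewise z y) :=
  rfl

theorem mul_swapOutside {w f g : (∀ i, X i) → ℝ} {J L : Finset ι}
    (hw : ∀ y, w y = f y * g y)
    (hf : ∀ y z, (∀ i ∈ L ∪ J, y i = z i) → f y = f z)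
    (hg : ∀ y z, (∀ i ∉ L, y i = z i) → g y = g z)
    {y z : ∀ i, X i} (hyz : ∀ i ∈ J, y i = z i) :
    w (swapOutside L (y, z)).1 * w (swapOutside L (y, z)).2 = w y * w z := by
  have hfy : f (L.piecewise y z) = f y := hf _ _ fun i hi => by
    by_cases hL : i ∈ L
    · simp [hL]
    · simp [hL, hyz i (by simpa [hL] using hi)]
  have hfz : f (L.piecewise z y) = f z := hf _ _ fun i hi => by
    by_cases hL : i ∈ L
    · simp [hL]
    · simp [hL, hyz i (by simpa [hL] using hi)]
  have hgy : g (L.piecewise y z) = g z := hg _ _ fun i hL => by simp [hL]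
  have hgz : g (L.piecewise z y) = g y := hg _ _ fun i hL => by simp [hL]
  rw [swapOutside_apply, hw, hw, hw y, hw z, hfy, hfz, hgy, hgz]
  ring

theorem agree_swapOutside_iff {I J K L : Finset ι}
    (hI : I ⊆ L) (hJ : Disjoint J L) (hK : Disjoint K L) (x y z : ∀ i, X i) :
    ((∀ i ∈ I ∪ J ∪ K, y i = x i) ∧ ∀ i ∈ J, z i = x i) ↔
      (∀ i ∈ I ∪ J, (swapOutside L (y, z)).1 i = x i) ∧
        ∀ i ∈ K ∪ J, (swapOutside L (y, z)).2 i = x i := by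
  have hJ' := disjoint_left.mp hJ
  have hK' := disjoint_left.mp hK
  simp only [swapOutside_apply, mem_union]
  constructor <;> rintro ⟨hy, hz⟩ <;> refine ⟨fun i hi => ?_, fun i hi => ?_⟩ <;>
    by_cases hL : i ∈ L <;> grind [piecewise_eq_of_mem, piecewise_eq_of_notMem]

end SwapOutside

section Marginal

variable {ι : Type*} [Fintype ι] [DecidableEq ι] {X : ι → Type*} [∀ i, Fintype (X i)]

def marginal (w : (∀ i, X i) → ℝ) (T : Finset ι) (x : ∀ i, X i) : ℝ :=
  ∑ y, if ∀ i ∈ T, y i = x i then w y else 0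

theorem marginal_mul_marginal (w : (∀ i, X i) → ℝ) (T T' : Finset ι) (x : ∀ i, X i) :
    marginal w T x * marginal w T' x =
      ∑ yz : (∀ i, X i) × (∀ i, X i),
        if (∀ i ∈ T, yz.1 i = x i) ∧ (∀ i ∈ T', yz.2 i = x i) then w yz.1 * w yz.2 else 0 := by
  rw [marginal, marginal, sum_mul_sum, ← univ_product_univ, sum_product]
  simp only [ite_zero_mul_ite_zero]

theorem marginal_union_mul_marginal_eq {w f g : (∀ i, X i) → ℝ} {I J K L : Finset ι}
    (hw : ∀ y, w y = f y * g y)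
    (hf : ∀ y z, (∀ i ∈ L ∪ J, y i = z i) → f y = f z)
    (hg : ∀ y z, (∀ i ∉ L, y i = z i) → g y = g z)
    (hI : I ⊆ L) (hJ : Disjoint J L) (hK : Disjoint K L) (x : ∀ i, X i) :
    marginal w (I ∪ J ∪ K) x * marginal w J x =
      marginal w (I ∪ J) x * marginal w (K ∪ J) x := by
  rw [marginal_mul_marginal, marginal_mul_marginal]
  refine Fintype.sum_equiv (swapOutside L) _ _ fun ⟨y, z⟩ => ?_
  by_cases h : (∀ i ∈ I ∪ J ∪ K, y i = x i) ∧ ∀ i ∈ J, z i = x i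
  · have hyz : ∀ i ∈ J, y i = z i := fun i hi => (h.1 i (by simp [hi])).trans (h.2 i hi).symm
    rw [if_pos h, if_pos ((agree_swapOutside_iff hI hJ hK x y z).mp h),
      mul_swapOutside hw hf hg hyz]
  · rw [if_neg h, if_neg (mt (agree_swapOutside_iff hI hJ hK x y z).mpr h)]

end Marginal

theorem prod_eq_prod_of_eqOn_scopes {ι A M : Type*} [CommMonoid M] {X : ι → Type*}
    {S : A → Finset ι} {ψ : A → (∀ i, X i) → M}
    (hψ : ∀ a x y, (∀ i ∈ S a, x i = y i) → ψ a x = ψ a y)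
    {F : Finset A} {P : ι → Prop} (hF : ∀ a ∈ F, ∀ i ∈ S a, P i)
    {y z : ∀ i, X i} (h : ∀ i, P i → y i = z i) :
    ∏ a ∈ F, ψ a y = ∏ a ∈ F, ψ a z :=
  prod_congr rfl fun a ha => hψ a y z fun i hi => h i (hF a ha i hi)

section FactorGraph

variable {N : ℕ} {A : Type*} {S : A → Finset (Fin N)} {I J : Finset (Fin N)}

theorem factorGraph_adj_inl_inr {i : Fin N} {a : A} :
    (factorGraph N A S).Adj (.inl i) (.inr a) ↔ i ∈ S a := by
  simp [factorGraph]

def reachableAvoiding (S : A → Finset (Fin N)) (I J : Finset (Fin N)) : Finset (Fin N) :=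
  univ.filter fun i => ∃ i₀ ∈ I, ∃ w : (factorGraph N A S).Walk (.inl i₀) (.inl i),
    ∀ j ∈ J, .inl j ∉ w.support

theorem mem_reachableAvoiding {i : Fin N} :
    i ∈ reachableAvoiding S I J ↔ ∃ i₀ ∈ I, ∃ w : (factorGraph N A S).Walk (.inl i₀) (.inl i),
      ∀ j ∈ J, .inl j ∉ w.support := by
  simp [reachableAvoiding]

theorem subset_reachableAvoiding (h : Disjoint I J) : I ⊆ reachableAvoiding S I J :=
  fun i hi => mem_reachableAvoiding.mpr
    ⟨i, hi, .nil, fun j hj hji => disjoint_left.mp h hi (by simp_all)⟩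

theorem disjoint_reachableAvoiding : Disjoint J (reachableAvoiding S I J) :=
  disjoint_left.mpr fun j hj hjR => by
    obtain ⟨_, _, w, hw⟩ := mem_reachableAvoiding.mp hjR
    exact hw j hj w.end_mem_support

theorem disjoint_reachableAvoiding_of_separates {K : Finset (Fin N)}
    (hsep : ∀ i ∈ I, ∀ k ∈ K, ∀ w : (factorGraph N A S).Walk (.inl i) (.inl k),
      ∃ j ∈ J, .inl j ∈ w.support) :
    Disjoint K (reachableAvoiding S I J) :=
  disjoint_left.mpr fun k hk hkR => by
    obtain ⟨i, hi, w, hw⟩ := mem_reachableAvoiding.mp hkR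
    obtain ⟨j, hj, hjw⟩ := hsep i hi k hk w
    exact hw j hj hjw

theorem scope_subset_reachableAvoiding {a : A} {i : Fin N} (hi : i ∈ S a)
    (hiR : i ∈ reachableAvoiding S I J) : S a ⊆ reachableAvoiding S I J ∪ J := by
  intro i' hi'
  by_cases hi'J : i' ∈ J
  · exact mem_union_right _ hi'J
  obtain ⟨i₀, hi₀, w, hw⟩ := mem_reachableAvoiding.mp hiR
  refine mem_union_left _ (mem_reachableAvoiding.mpr ⟨i₀, hi₀,
    (w.concat (factorGraph_adj_inl_inr.mpr hi)).concat
      ((factorGraph_adj_inl_inr.mpr hi').symm),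
    fun j hj hjw => ?_⟩)
  simp only [SimpleGraph.Walk.support_concat, List.append_assoc, List.cons_append,
    List.nil_append, List.mem_append, List.mem_cons, reduceCtorEq, Sum.inl.injEq,
    List.not_mem_nil, or_false, false_or] at hjw
  rcases hjw with hjw | rfl
  · exact hw j hj hjw
  · exact hi'J hj

end FactorGraph

theorem separated_neighborhood_general
    (N : ℕ) (X : Fin N → Type*) [∀ i, Fintype (X i)]
    (A : Type*) [Fintype A]
    (S : A → Finset (Fin N)) (ψ : A → (∀ i, X i) → ℝ)
    (hψ_local : ∀ a x y, (∀ i ∈ S a, x i = y i) → ψ a x = ψ a y)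
    (Z : ℝ)
    (p : (∀ i, X i) → ℝ) (hp : ∀ x, p x = (∏ a, ψ a x) / Z)
    (I J K : Finset (Fin N))
    (hIJ : Disjoint I J)
    (hsep : ∀ i ∈ I, ∀ k ∈ K,
      ∀ w : (factorGraph N A S).Walk (Sum.inl i) (Sum.inl k),
        ∃ j ∈ J, Sum.inl j ∈ w.support)
    (marg : Finset (Fin N) → (∀ i, X i) → ℝ)
    (hmarg : ∀ T x, marg T x = ∑ y : ∀ i, X i,
      if ∀ i ∈ T, y i = x i then p y else 0)
    (x : ∀ i, X i) (hJpos : 0 < marg J x) :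
    marg (I ∪ J ∪ K) x / marg J x
      = (marg (I ∪ J) x / marg J x) * (marg (K ∪ J) x / marg J x) := by
  -- `congr!` reconciles the `Decidable` instances of the two `if`s
  obtain rfl : marg = marginal p := funext₂ fun T y => by rw [hmarg, marginal]; congr!
  set R := reachableAvoiding S I J
  set F := univ.filter fun a => ∃ i ∈ S a, i ∈ R
  have hF : ∀ a ∈ F, ∀ i ∈ S a, i ∈ R ∪ J := fun a ha => by
    obtain ⟨i, hi, hiR⟩ := (mem_filter.mp ha).2
    exact scope_subset_reachableAvoiding hi hiR
  have hFc : ∀ a ∈ Fᶜ, ∀ i ∈ S a, i ∉ R := fun a ha i hi hiR =>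
    mem_compl.mp ha (mem_filter.mpr ⟨mem_univ a, i, hi, hiR⟩)
  have key := marginal_union_mul_marginal_eq (w := p) (x := x)
    (f := fun y => (∏ a ∈ F, ψ a y) / Z) (g := fun y => ∏ a ∈ Fᶜ, ψ a y)
    (fun y => by rw [hp, ← prod_mul_prod_compl F, div_mul_eq_mul_div])
    (fun y z h => by rw [prod_eq_prod_of_eqOn_scopes hψ_local hF h])
    (fun y z h => prod_eq_prod_of_eqOn_scopes hψ_local hFc h)
    (subset_reachableAvoiding hIJ) disjoint_reachableAvoiding
    (disjoint_reachableAvoiding_of_separates hsep)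
  have hJ := hJpos.ne'
  rw [div_mul_div_comm, div_eq_div_iff hJ (mul_ne_zero hJ hJ), ← key]
  ring

/-- **Separated neighborhood lemma.**
If `I, J, K` are disjoint sets of variables (not necessarily covering all
variables) such that every path in the factor graph from `I` to `K` passes
through a vertex of `J`, then `p(x_I, x_K | x_J) = p(x_I | x_J) · p(x_K | x_J)`
whenever `p(x_J) > 0`. -/
theorem separated_neighborhood
    (N : ℕ) (X : Fin N → Type*) [∀ i, Fintype (X i)] [∀ i, Nonempty (X i)]
    (A : Type*) [Fintype A]
    (S : A → Finset (Fin N)) (ψ : A → (∀ i, X i) → ℝ)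
    (hψ_nonneg : ∀ a x, 0 ≤ ψ a x)
    (hψ_local : ∀ a x y, (∀ i ∈ S a, x i = y i) → ψ a x = ψ a y)
    (Z : ℝ) (hZ : Z = ∑ x : ∀ i, X i, ∏ a, ψ a x) (hZpos : 0 < Z)
    (p : (∀ i, X i) → ℝ) (hp : ∀ x, p x = (∏ a, ψ a x) / Z)
    (I J K : Finset (Fin N))
    (hIJ : Disjoint I J) (hIK : Disjoint I K) (hJK : Disjoint J K)
    (hsep : ∀ i ∈ I, ∀ k ∈ K,
      ∀ w : (factorGraph N A S).Walk (Sum.inl i) (Sum.inl k),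
        ∃ j ∈ J, Sum.inl j ∈ w.support)
    (marg : Finset (Fin N) → (∀ i, X i) → ℝ)
    (hmarg : ∀ T x, marg T x = ∑ y : ∀ i, X i,
      if ∀ i ∈ T, y i = x i then p y else 0)
    (x : ∀ i, X i) (hJpos : 0 < marg J x) :
    marg (I ∪ J ∪ K) x / marg J x
      = (marg (I ∪ J) x / marg J x) * (marg (K ∪ J) x / marg J x) :=
  separated_neighborhood_general N X A S ψ hψ_local Z p hp I J K hIJ hsep marg hmarg x hJpos
end
end

section
/- If the contact graph on individuals {1,...,N} is acyclic (a forest) and the indices are a topological ordering (each node appears after all its neighbors on the path toward the root of its tree component), and the posterior distribution factorizes as P(x) ∝ ∏_i Ψ_i(x_i, x_{∂i}) with each factor Ψ_i depending only on node i and its graph neighbors ∂i, then each autoregressive conditional satisfies P(x_i | x_1, ..., x_{i-1}) = P(x_i | {x_j : j < i, dist(i,j) ≤ 2}), i.e., it depends only on nearest and next-nearest neighbors of i in the contact graph with smaller index. -/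
open Finset Classical
noncomputable section

/-!
With the indices in topological order, the parent of a vertex is its unique smaller neighbour.
Let `C` be the union of the subtrees rooted at `i` and at the siblings `s ≥ i` of `i`. Every
vertex of `C` has index `≥ i`, and a factor whose scope meets `C` has its scope inside `C`
together with the parent, grandparent and earlier siblings of `i`, all of which lie in `B`.
So exchanging the `C`-coordinates of two configurations that agree on `B` preserves the product
of their weights; this exchange is an involution on pairs of configurations, and summing over
it gives `P(x_i, x_A) P(x_B) = P(x_i, x_B) P(x_A)` for `A = {j | j < i}`.
-/

section Factorization

variable {ι κ : Type*} {X : ι → Type*}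

theorem prod_piecewise_mul_prod_piecewise {M : Type*} [CommMonoid M] [Fintype κ]
    (Ψ : κ → (∀ j, X j) → M) (S : κ → Set ι)
    (hΨ : ∀ k x y, (∀ j ∈ S k, x j = y j) → Ψ k x = Ψ k y)
    (C B : Set ι) [∀ j, Decidable (j ∈ C)]
    (hsep : ∀ k, ∀ v ∈ S k, v ∈ C → S k ⊆ C ∪ B)
    (y z : ∀ j, X j) (hyz : ∀ j ∈ B, y j = z j) :
    (∏ k, Ψ k (C.piecewise y z)) * ∏ k, Ψ k (C.piecewise z y)
      = (∏ k, Ψ k y) * ∏ k, Ψ k z := by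
  simp only [← Finset.prod_mul_distrib]
  refine Finset.prod_congr rfl fun k _ => ?_
  by_cases hmeets : ∃ v ∈ S k, v ∈ C
  · obtain ⟨v, hvk, hv⟩ := hmeets
    have agree : ∀ j ∈ S k, j ∉ C → y j = z j := fun j hj hjC =>
      hyz j ((hsep k v hvk hv hj).resolve_left hjC)
    congr 1 <;> refine hΨ k _ _ fun j hj => ?_ <;> by_cases hjC : j ∈ C <;>
      simp [hjC, agree j hj]
  · push Not at hmeets
    rw [mul_comm]
    congr 1 <;> refine hΨ k _ _ fun j hj => ?_ <;> simp [hmeets j hj]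

variable [Fintype ι] [DecidableEq ι] [∀ j, Fintype (X j)] {R : Type*}

def cylinderMass [AddCommMonoid R] (P : (∀ j, X j) → R) (T : Finset ι) (x : ∀ j, X j) : R :=
  ∑ y, if ∀ j ∈ T, y j = x j then P y else 0

theorem cylinderMass_anti [AddCommMonoid R] [PartialOrder R] [IsOrderedAddMonoid R]
    {P : (∀ j, X j) → R} (hP : ∀ y, 0 ≤ P y) {A B : Finset ι} (hBA : B ⊆ A) (x : ∀ j, X j) :
    cylinderMass P A x ≤ cylinderMass P B x := by
  refine Finset.sum_le_sum fun y _ => ?_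
  split_ifs with hA hB hB
  · exact le_rfl
  · exact absurd (fun j hj => hA j (hBA hj)) hB
  · exact hP y
  · exact le_rfl

theorem cylinderMass_union_mul_cylinderMass [Semiring R] (P : (∀ j, X j) → R)
    (C : Set ι) [∀ j, Decidable (j ∈ C)] {U A B : Finset ι}
    (hU : ∀ j ∈ U, j ∈ C) (hA : ∀ j ∈ A, j ∉ C) (hBA : B ⊆ A)
    (hP : ∀ y z, (∀ j ∈ B, y j = z j) →
      P (C.piecewise y z) * P (C.piecewise z y) = P y * P z)
    (x : ∀ j, X j) :
    cylinderMass P (U ∪ A) x * cylinderMass P B x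
      = cylinderMass P (U ∪ B) x * cylinderMass P A x := by
  let swap : (∀ j, X j) × (∀ j, X j) → (∀ j, X j) × (∀ j, X j) :=
    fun p => (C.piecewise p.1 p.2, C.piecewise p.2 p.1)
  have hswap : Function.Involutive swap := by
    rintro ⟨y, z⟩
    ext j <;> by_cases hj : j ∈ C <;> simp [swap, hj]
  have hcyl : ∀ y z : ∀ j, X j,
      ((∀ j ∈ U ∪ A, y j = x j) ∧ ∀ j ∈ B, z j = x j) ↔
        ((∀ j ∈ U ∪ B, C.piecewise y z j = x j) ∧ ∀ j ∈ A, C.piecewise z y j = x j) := by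
    intro y z
    simp only [Finset.mem_union, or_imp, forall_and]
    constructor
    · rintro ⟨⟨hyU, hyA⟩, hzB⟩
      refine ⟨⟨fun j hj => ?_, fun j hj => ?_⟩, fun j hj => ?_⟩
      · rw [Set.piecewise_eq_of_mem _ _ _ (hU j hj), hyU j hj]
      · rw [Set.piecewise_eq_of_notMem _ _ _ (hA j (hBA hj)), hzB j hj]
      · rw [Set.piecewise_eq_of_notMem _ _ _ (hA j hj), hyA j hj]
    · rintro ⟨⟨hU', hB'⟩, hA'⟩
      refine ⟨⟨fun j hj => ?_, fun j hj => ?_⟩, fun j hj => ?_⟩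
      · rw [← hU' j hj, Set.piecewise_eq_of_mem _ _ _ (hU j hj)]
      · rw [← hA' j hj, Set.piecewise_eq_of_notMem _ _ _ (hA j hj)]
      · rw [← hB' j hj, Set.piecewise_eq_of_notMem _ _ _ (hA j (hBA hj))]
  simp only [cylinderMass, Finset.sum_mul_sum, ite_zero_mul_ite_zero, ← Fintype.sum_prod_type']
  refine Fintype.sum_bijective swap hswap.bijective _ _ fun ⟨y, z⟩ => ?_
  by_cases hyz : (∀ j ∈ U ∪ A, y j = x j) ∧ ∀ j ∈ B, z j = x j
  · rw [if_pos hyz, if_pos ((hcyl y z).mp hyz), hP y z fun j hj => ?_]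
    rw [hyz.1 j (Finset.mem_union_right _ (hBA hj)), hyz.2 j hj]
  · rw [if_neg hyz, if_neg (mt (hcyl y z).mpr hyz)]

end Factorization

namespace SimpleGraph

variable {V : Type*} [LinearOrder V] (G : SimpleGraph V)

def IsDescendant (t v : V) : Prop :=
  Relation.ReflTransGen (fun a b => G.Adj a b ∧ a < b) t v

def laterSiblingSubtrees (i : V) : Set V :=
  {v | ∃ t, i ≤ t ∧ G.IsDescendant t v ∧ (t = i ∨ ∃ p, G.Adj i p ∧ p < i ∧ G.Adj p t)}

variable {G}

theorem IsDescendant.le {t v : V} (h : G.IsDescendant t v) : t ≤ v := by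
  induction h with
  | refl => exact le_rfl
  | tail _ hbc ih => exact ih.trans hbc.2.le

theorem le_of_mem_laterSiblingSubtrees {i v : V} (hv : v ∈ G.laterSiblingSubtrees i) : i ≤ v :=
  let ⟨_, hit, htv, _⟩ := hv
  hit.trans htv.le

theorem self_mem_laterSiblingSubtrees (i : V) : i ∈ G.laterSiblingSubtrees i :=
  ⟨i, le_rfl, .refl, .inl rfl⟩

variable (hG : ∀ a, {b | G.Adj a b ∧ b < a}.Subsingleton)
include hG

theorem mem_laterSiblingSubtrees_or_parent_of_adj {i u v : V}
    (hv : v ∈ G.laterSiblingSubtrees i) (hvu : G.Adj v u) :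
    u ∈ G.laterSiblingSubtrees i ∨ (G.Adj i u ∧ u < i) := by
  obtain ⟨t, hit, htv, ht⟩ := hv
  rcases lt_or_gt_of_ne hvu.ne' with huv | hvu'
  · rcases htv.cases_tail with rfl | ⟨w, htw, hwv, hw⟩
    · rcases ht with rfl | ⟨p, hip, hpi, hpt⟩
      · exact .inr ⟨hvu, huv⟩
      · obtain rfl : u = p := hG v ⟨hvu, huv⟩ ⟨hpt.symm, hpi.trans_le hit⟩
        exact .inr ⟨hip, hpi⟩
    · obtain rfl : u = w := hG v ⟨hvu, huv⟩ ⟨hwv.symm, hw⟩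
      exact .inl ⟨t, hit, htw, ht⟩
  · exact .inl ⟨t, hit, htv.tail ⟨hvu, hvu'⟩, ht⟩

theorem insert_neighborSet_subset_laterSiblingSubtrees_union {i k v : V}
    (hvk : v ∈ insert k (G.neighborSet k)) (hv : v ∈ G.laterSiblingSubtrees i) :
    insert k (G.neighborSet k) ⊆
      G.laterSiblingSubtrees i ∪ {j | j < i ∧ ∃ w : G.Walk i j, w.length ≤ 2} := by
  by_cases hk : k ∈ G.laterSiblingSubtrees i
  · rintro j (rfl | (hkj : G.Adj k j))
    · exact .inl hk
    · exact (mem_laterSiblingSubtrees_or_parent_of_adj hG hk hkj).imp_right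
        fun ⟨hij, hji⟩ => ⟨hji, .cons hij .nil, by simp⟩
  · have ⟨hik, hki⟩ : G.Adj i k ∧ k < i := by
      rcases hvk with rfl | hkv
      · exact absurd hv hk
      · exact (mem_laterSiblingSubtrees_or_parent_of_adj hG hv hkv.symm).resolve_left hk
    rintro j (rfl | (hkj : G.Adj k j))
    · exact .inr ⟨hki, .cons hik .nil, by simp⟩
    · rcases lt_or_ge j i with hji | hij
      · exact .inr ⟨hji, .cons hik (.cons hkj .nil), by simp⟩
      · exact .inl ⟨j, hij, .refl, .inr ⟨k, hik, hki, hkj⟩⟩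

end SimpleGraph

theorem acyclic_contact_graph_next_nearest_neighbors_general
    (N : ℕ) (X : Fin N → Type*) [∀ i, Fintype (X i)]
    (G : SimpleGraph (Fin N))
    (htopo : ∀ i : Fin N,
      (Finset.univ.filter (fun j => G.Adj i j ∧ j < i)).card ≤ 1)
    (Ψ : Fin N → (∀ i, X i) → ℝ)
    (hΨ_nonneg : ∀ i x, 0 ≤ Ψ i x)
    (hΨ_local : ∀ i x y, (∀ j, (j = i ∨ G.Adj i j) → x j = y j) → Ψ i x = Ψ i y)
    (Z : ℝ) (hZpos : 0 < Z)
    (P : (∀ i, X i) → ℝ) (hP : ∀ x, P x = (∏ i, Ψ i x) / Z)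
    (marg : Finset (Fin N) → (∀ i, X i) → ℝ)
    (hmarg : ∀ T x, marg T x = ∑ y : ∀ i, X i,
      if ∀ i ∈ T, y i = x i then P y else 0)
    (i : Fin N)
    (B : Finset (Fin N))
    (hB : B = Finset.univ.filter
      (fun j => j < i ∧ ∃ w : G.Walk i j, w.length ≤ 2))
    (x : ∀ i, X i)
    (hpos : 0 < marg (Finset.univ.filter (· < i)) x) :
    marg (insert i (Finset.univ.filter (· < i))) x
        / marg (Finset.univ.filter (· < i)) x
      = marg (insert i B) x / marg B x := by
  set A := Finset.univ.filter (· < i)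
  obtain rfl : marg = cylinderMass P := funext₂ fun T x => by
    rw [hmarg, cylinderMass]; congr!
  have hG : ∀ a, {b | G.Adj a b ∧ b < a}.Subsingleton := fun a b hb c hc =>
    Finset.card_le_one.mp (htopo a) b (by simpa using hb) c (by simpa using hc)
  have hBA : B ⊆ A := hB ▸ Finset.monotone_filter_right _ fun _ _ h => h.1
  have hsep : ∀ k, ∀ v ∈ insert k (G.neighborSet k), v ∈ G.laterSiblingSubtrees i →
      insert k (G.neighborSet k) ⊆ G.laterSiblingSubtrees i ∪ ↑B := by
    rw [hB, Finset.coe_filter_univ]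
    exact fun _ _ => G.insert_neighborSet_subset_laterSiblingSubtrees_union hG
  -- `j ∈ insert k (G.neighborSet k)` unfolds to the scope `j = k ∨ G.Adj k j` of `hΨ_local`.
  have hswap := prod_piecewise_mul_prod_piecewise Ψ _ hΨ_local _ _ hsep
  have key := cylinderMass_union_mul_cylinderMass P (G.laterSiblingSubtrees i)
    (U := {i}) (by simpa using G.self_mem_laterSiblingSubtrees i)
    (fun j hj hjC => (Finset.mem_filter.mp hj).2.not_ge (G.le_of_mem_laterSiblingSubtrees hjC))
    hBA (fun y z hyz => by simp only [hP, div_mul_div_comm, hswap y z hyz]) x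
  have hPnn y : 0 ≤ P y := hP y ▸ div_nonneg (prod_nonneg fun k _ => hΨ_nonneg k y) hZpos.le
  have hBpos := hpos.trans_le (cylinderMass_anti hPnn hBA x)
  rw [div_eq_div_iff hpos.ne' hBpos.ne', Finset.insert_eq, Finset.insert_eq, key]

/-- **Next-nearest-neighbor conditionals on acyclic contact graphs.**
If the contact graph `G` on individuals `Fin N` is acyclic, the indices are a
topological ordering (each node has at most one neighbor with smaller index,
its parent toward the root), and the posterior factorizes as
`P x ∝ ∏ i, Ψ i x` with `Ψ i` depending only on `x_i` and `{x_j : j ∈ ∂i}`,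
then each autoregressive conditional satisfies
`P(x_i | x_1, …, x_{i-1}) = P(x_i | {x_j : j < i, dist(i,j) ≤ 2})`. -/
theorem acyclic_contact_graph_next_nearest_neighbors
    (N : ℕ) (X : Fin N → Type*) [∀ i, Fintype (X i)] [∀ i, Nonempty (X i)]
    (G : SimpleGraph (Fin N))
    (hacyclic : G.IsAcyclic)
    (htopo : ∀ i : Fin N,
      (Finset.univ.filter (fun j => G.Adj i j ∧ j < i)).card ≤ 1)
    (Ψ : Fin N → (∀ i, X i) → ℝ)
    (hΨ_nonneg : ∀ i x, 0 ≤ Ψ i x)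
    (hΨ_local : ∀ i x y, (∀ j, (j = i ∨ G.Adj i j) → x j = y j) → Ψ i x = Ψ i y)
    (Z : ℝ) (hZ : Z = ∑ x : ∀ i, X i, ∏ i, Ψ i x) (hZpos : 0 < Z)
    (P : (∀ i, X i) → ℝ) (hP : ∀ x, P x = (∏ i, Ψ i x) / Z)
    (marg : Finset (Fin N) → (∀ i, X i) → ℝ)
    (hmarg : ∀ T x, marg T x = ∑ y : ∀ i, X i,
      if ∀ i ∈ T, y i = x i then P y else 0)
    (i : Fin N)
    (B : Finset (Fin N))
    (hB : B = Finset.univ.filter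
      (fun j => j < i ∧ ∃ w : G.Walk i j, w.length ≤ 2))
    (x : ∀ i, X i)
    (hpos : 0 < marg (Finset.univ.filter (· < i)) x) :
    marg (insert i (Finset.univ.filter (· < i))) x
        / marg (Finset.univ.filter (· < i)) x
      = marg (insert i B) x / marg B x :=
  acyclic_contact_graph_next_nearest_neighbors_general N X G htopo Ψ hΨ_nonneg hΨ_local Z hZpos P hP
    marg hmarg i B hB x hpos
end
end
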